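/- Let E be a real finite-dimensional Euclidean space and f : E → ℝ be continuous on some neighborhood of x ∈ E, Lipschitz on a neighborhood of x, and l-stable at x. If the lower Dini directional derivatives satisfy f'_D(x;h) = 0 and f''_D(x;h) > 0 for every h ∈ E with h ≠ 0, then x is an isolated local minimizer of order 2 for f. -/

import Mathlib

/-!
Along a unit direction `h₀`, `f''_D(x;h₀) > c > 0` gives `f (x + t • h₀) ≥ f x + c t² / 2` for
small `t > 0`. Since `f'_D(x;·) = 0`, `l`-stability bounds `f'_D(y;·)` below by
`-K ‖y - x‖ ‖·‖` near `x`, and the mean value inequality for lower Dini derivatives turns this into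
`f (x + t • u) ≥ f (x + t • h₀) - K t² (‖h₀‖ + ‖u - h₀‖) ‖u - h₀‖`. So quadratic growth persists,
with `c / 4`, for all directions `u` close to `h₀`, and compactness of the unit sphere makes the
constant uniform.
-/

open Filter Topology

/-- The lower Dini directional derivative
`f'_D(x;u) = liminf_{t↓0} (f(x+tu) − f(x))/t`, valued in `EReal`. -/
noncomputable def diniD1 {E : Type*} [NormedAddCommGroup E] [InnerProductSpace ℝ E]
    (f : E → ℝ) (x u : E) : EReal :=
  Filter.liminf (fun t : ℝ => (((f (x + t • u) - f x) / t : ℝ) : EReal)) (𝓝[>] (0 : ℝ))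

/-- `f` is `l`-stable at `x`: there are a neighborhood `U` of `x` and a constant `K > 0`
such that the lower Dini derivatives `f'_D(y;u)`, `f'_D(x;u)` are finite and satisfy
`|f'_D(y;u) − f'_D(x;u)| ≤ K‖y−x‖‖u‖` for all `y ∈ U`, `u ∈ E`. -/
def LStableAt {E : Type*} [NormedAddCommGroup E] [InnerProductSpace ℝ E]
    (f : E → ℝ) (x : E) : Prop :=
  ∃ U ∈ 𝓝 x, ∃ K : ℝ, 0 < K ∧ ∀ y ∈ U, ∀ u : E,
    ∃ dy dx : ℝ, diniD1 f y u = (dy : EReal) ∧ diniD1 f x u = (dx : EReal) ∧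
      |dy - dx| ≤ K * ‖y - x‖ * ‖u‖

/-- The second-order lower Dini directional derivative relative to the (real) value `d`
of the first-order lower Dini derivative:
`f''_D(x;u) = liminf_{t↓0} 2(f(x+tu) − f(x) − t·d)/t²` where `d = f'_D(x;u)`. -/
noncomputable def diniD2 {E : Type*} [NormedAddCommGroup E] [InnerProductSpace ℝ E]
    (f : E → ℝ) (x u : E) (d : ℝ) : EReal :=
  Filter.liminf
    (fun t : ℝ => ((2 * (f (x + t • u) - f x - t * d) / t ^ 2 : ℝ) : EReal)) (𝓝[>] (0 : ℝ))

open Set Metric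

lemma tendsto_const_add_nhdsGT_zero (s : ℝ) :
    Tendsto (fun t : ℝ => s + t) (𝓝[>] 0) (𝓝[>] s) :=
  tendsto_nhdsWithin_of_tendsto_nhds_of_eventually_within _
    (((continuous_const_add s).tendsto' 0 s (add_zero s)).mono_left nhdsWithin_le_nhds)
    (eventually_nhdsWithin_of_forall fun _ ht => lt_add_of_pos_right s ht)

section Dini

variable {E : Type*} [NormedAddCommGroup E] [InnerProductSpace ℝ E] {f : E → ℝ}

@[simp]
lemma diniD1_zero_right (x : E) : diniD1 f x 0 = 0 := by
  simp [diniD1]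

lemma eventually_lt_div_of_lt_diniD1 {x u : E} {r : ℝ} (h : (r : EReal) < diniD1 f x u) :
    ∀ᶠ t in 𝓝[>] 0, r < (f (x + t • u) - f x) / t :=
  (eventually_lt_of_lt_liminf h).mono fun _ ht => EReal.coe_lt_coe_iff.mp ht

theorem add_le_of_le_diniD1_segment {z v : E} {m : ℝ}
    (hf : ContinuousOn f (segment ℝ z (z + v)))
    (hm : ∀ θ ∈ Ico (0 : ℝ) 1, (m : EReal) ≤ diniD1 f (z + θ • v) v) :
    f z + m ≤ f (z + v) := by
  set g : ℝ → ℝ := fun θ => f (z + θ • v)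
  have hg : ContinuousOn (fun θ => -g θ) (Icc 0 1) := by
    refine (hf.comp (by fun_prop) fun θ hθ => ?_).neg
    rw [segment_eq_image']
    exact ⟨θ, hθ, by simp⟩
  have hslope : ∀ θ ∈ Ico (0 : ℝ) 1, ∀ r, -m < r →
      ∃ᶠ w in 𝓝[>] θ, slope (fun θ => -g θ) θ w < r := by
    intro θ hθ r hr
    have hlt : ((-r : ℝ) : EReal) < diniD1 f (z + θ • v) v :=
      lt_of_lt_of_le (EReal.coe_lt_coe_iff.mpr (by linarith)) (hm θ hθ)
    have hev : ∀ᶠ t in 𝓝[>] (0 : ℝ), slope (fun θ => -g θ) θ (θ + t) < r := by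
      filter_upwards [eventually_lt_div_of_lt_diniD1 hlt, self_mem_nhdsWithin]
        with t hq (ht : 0 < t)
      rw [slope_def_field, add_sub_cancel_left]
      simp only [g, add_smul, ← add_assoc]
      rw [lt_div_iff₀ ht] at hq
      rw [div_lt_iff₀ ht]
      linarith
    exact (tendsto_const_add_nhdsGT_zero θ).frequently hev.frequently
  have := image_le_of_liminf_slope_right_le_deriv_boundary hg (B := fun θ => -g 0 - m * θ)
    (B' := fun _ => -m) (by simp) (by fun_prop)
    (fun θ _ => by simpa using ((hasDerivAt_id θ).const_mul m).const_sub (-g 0) |>.hasDerivWithinAt)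
    hslope (right_mem_Icc.mpr zero_le_one)
  simp only [g, one_smul, zero_smul, add_zero, mul_one] at this
  linarith

lemma eventually_lt_of_lt_diniD2 {x u : E} {c : ℝ} (h : (c : EReal) < diniD2 f x u 0) :
    ∀ᶠ t in 𝓝[>] 0, c * t ^ 2 < 2 * (f (x + t • u) - f x) := by
  filter_upwards [eventually_lt_of_lt_liminf h, self_mem_nhdsWithin] with t ht (htpos : 0 < t)
  rwa [EReal.coe_lt_coe_iff, lt_div_iff₀ (by positivity), mul_zero, sub_zero] at ht

lemma LStableAt.exists_forall_neg_le_diniD1 {x : E} (hs : LStableAt f x)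
    (hx : ∀ u, diniD1 f x u = 0) :
    ∃ U ∈ 𝓝 x, ∃ K, 0 ≤ K ∧ ∀ y ∈ U, ∀ u, ((-(K * ‖y - x‖ * ‖u‖) : ℝ) : EReal) ≤ diniD1 f y u := by
  obtain ⟨U, hU, K, hK, hb⟩ := hs
  refine ⟨U, hU, K, hK.le, fun y hy u => ?_⟩
  obtain ⟨dy, dx, hdy, hdx, hle⟩ := hb y hy u
  obtain rfl : dx = 0 := by rw [hx u] at hdx; exact_mod_cast hdx.symm
  rw [hdy, EReal.coe_le_coe_iff]
  linarith [(abs_le.mp hle).1]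

theorem sub_le_of_forall_neg_le_diniD1 {x z v : E} {U : Set E} {K : ℝ} (hK : 0 ≤ K)
    (hf : ContinuousOn f U) (hseg : segment ℝ z (z + v) ⊆ U)
    (hlow : ∀ y ∈ U, ∀ u, ((-(K * ‖y - x‖ * ‖u‖) : ℝ) : EReal) ≤ diniD1 f y u) :
    f z - K * (‖z - x‖ + ‖v‖) * ‖v‖ ≤ f (z + v) := by
  rw [sub_eq_add_neg]
  refine add_le_of_le_diniD1_segment (hf.mono hseg) fun θ hθ => ?_
  have hmem : z + θ • v ∈ segment ℝ z (z + v) := by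
    rw [segment_eq_image']
    exact ⟨θ, Ico_subset_Icc_self hθ, by simp⟩
  refine le_trans (EReal.coe_le_coe_iff.mpr ?_) (hlow _ (hseg hmem) v)
  have hθv : ‖θ • v‖ ≤ ‖v‖ := by
    rw [norm_smul, Real.norm_of_nonneg hθ.1]
    exact mul_le_of_le_one_left (norm_nonneg v) hθ.2.le
  have hdist : ‖z + θ • v - x‖ ≤ ‖z - x‖ + ‖v‖ := by
    rw [add_sub_right_comm]
    exact (norm_add_le _ _).trans (add_le_add_right hθv _)
  gcongr

theorem eventually_quadratic_growth_near_direction {x h₀ : E} {U : Set E} {K : ℝ}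
    (hU : U ∈ 𝓝 x) (hK : 0 ≤ K) (hf : ContinuousOn f U)
    (hlow : ∀ y ∈ U, ∀ u, ((-(K * ‖y - x‖ * ‖u‖) : ℝ) : EReal) ≤ diniD1 f y u)
    (hpos : 0 < diniD2 f x h₀ 0) :
    ∀ᶠ p : (ℝ × ℝ) × E in 𝓝 ((0, 0), h₀),
      0 < p.1.2 → f x + p.1.1 * p.1.2 ^ 2 < f (x + p.1.2 • p.2) := by
  obtain ⟨c, hc0, hc⟩ := EReal.exists_between_coe_real hpos
  replace hc0 : 0 < c := EReal.coe_pos.mp hc0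
  obtain ⟨ε, hε, hball⟩ := Metric.mem_nhds_iff.mp hU
  have hC : ∀ᶠ p : (ℝ × ℝ) × E in 𝓝 ((0, 0), h₀), p.1.1 < c / 4 :=
    continuous_fst.fst.continuousAt.eventually_lt continuousAt_const (by simpa using hc0)
  have hdir : ∀ᶠ p : (ℝ × ℝ) × E in 𝓝 ((0, 0), h₀),
      0 < p.1.2 → c * p.1.2 ^ 2 < 2 * (f (x + p.1.2 • h₀) - f x) :=
    (continuous_fst.snd.tendsto (((0 : ℝ), (0 : ℝ)), h₀)).eventually
      (eventually_nhdsWithin_iff.mp (eventually_lt_of_lt_diniD2 hc))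
  have hdev : ∀ᶠ p : (ℝ × ℝ) × E in 𝓝 ((0, 0), h₀),
      K * (‖h₀‖ + ‖p.2 - h₀‖) * ‖p.2 - h₀‖ < c / 4 :=
    ContinuousAt.eventually_lt (by fun_prop) continuousAt_const (by simpa using hc0)
  have hsmall : ∀ᶠ p : (ℝ × ℝ) × E in 𝓝 ((0, 0), h₀), |p.1.2| * (‖h₀‖ + ‖p.2 - h₀‖) < ε :=
    ContinuousAt.eventually_lt (by fun_prop) continuousAt_const (by simpa using hε)
  filter_upwards [hC, hdir, hdev, hsmall] with ⟨⟨C, t⟩, u⟩ hC hdir hdev hsmall ht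
  dsimp only at hC hdir hdev hsmall ht ⊢
  rw [abs_of_pos ht] at hsmall
  have hz : ‖x + t • h₀ - x‖ = t * ‖h₀‖ := by
    rw [add_sub_cancel_left, norm_smul, Real.norm_of_nonneg ht.le]
  have hv : ‖t • (u - h₀)‖ = t * ‖u - h₀‖ := by
    rw [norm_smul, Real.norm_of_nonneg ht.le]
  have hzv : x + t • h₀ + t • (u - h₀) = x + t • u := by rw [smul_sub]; abel
  have hseg : segment ℝ (x + t • h₀) (x + t • h₀ + t • (u - h₀)) ⊆ U := by
    refine ((convex_ball x ε).segment_subset ?_ ?_).trans hball <;>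
      rw [mem_ball, dist_eq_norm]
    · nlinarith [norm_nonneg (u - h₀)]
    · rw [hzv, add_sub_cancel_left, norm_smul, Real.norm_of_nonneg ht.le]
      nlinarith [norm_le_insert' u h₀]
  have hkey := sub_le_of_forall_neg_le_diniD1 hK hf hseg hlow
  rw [hz, hv, hzv] at hkey
  have ht2 : 0 < t ^ 2 := by positivity
  nlinarith [hdir ht, mul_lt_mul_of_pos_left hC ht2, mul_lt_mul_of_pos_left hdev ht2]

end Dini

lemma eventually_nhdsNE_of_eventually_sphere {F : Type*} [NormedAddCommGroup F] [NormedSpace ℝ F]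
    {x : F} {Q : ℝ → F → Prop}
    (h : ∀ᶠ t in 𝓝[>] 0, ∀ u ∈ sphere (0 : F) 1, Q t (x + t • u)) :
    ∀ᶠ y in 𝓝[≠] x, Q ‖y - x‖ y := by
  filter_upwards [(tendsto_norm_sub_self_nhdsNE x).eventually h, self_mem_nhdsWithin]
    with y hy (hne : y ≠ x)
  have hpos : ‖y - x‖ ≠ 0 := norm_ne_zero_iff.mpr (sub_ne_zero.mpr hne)
  simpa [smul_smul, hpos] using hy (‖y - x‖⁻¹ • (y - x)) (by simp [norm_smul, hpos])

theorem lstable_dini_sufficient_isolated_min_general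
    {E : Type*} [NormedAddCommGroup E] [InnerProductSpace ℝ E] [FiniteDimensional ℝ E]
    (f : E → ℝ) (x : E)
    (hcont : ∃ U ∈ 𝓝 x, ContinuousOn f U)
    (hstab : LStableAt f x)
    (h : ∀ u : E, u ≠ 0 → diniD1 f x u = 0 ∧ 0 < diniD2 f x u 0) :
    ∃ C : ℝ, 0 < C ∧ ∃ N ∈ 𝓝 x, ∀ y ∈ N, y ≠ x → f x + C * ‖y - x‖ ^ 2 < f y := by
  obtain ⟨U, hU, hf⟩ := hcont
  have hx : ∀ u, diniD1 f x u = 0 := fun u => by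
    rcases eq_or_ne u 0 with rfl | hu
    exacts [diniD1_zero_right x, (h u hu).1]
  obtain ⟨V, hV, K, hK, hlow⟩ := hstab.exists_forall_neg_le_diniD1 hx
  -- The constant `C` is a variable tending to `0`, so that compactness of the sphere yields one
  -- constant for all directions.
  have hunif : ∀ᶠ p : ℝ × ℝ in 𝓝 (0, 0), ∀ u ∈ sphere (0 : E) 1,
      0 < p.2 → f x + p.1 * p.2 ^ 2 < f (x + p.2 • u) :=
    (isCompact_sphere 0 1).eventually_forall_of_forall_eventually fun u hu =>
      eventually_quadratic_growth_near_direction (inter_mem hU hV) hK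
        (hf.mono inter_subset_left) (fun y hy => hlow y hy.2)
        (h u (ne_zero_of_mem_sphere one_ne_zero ⟨u, hu⟩)).2
  obtain ⟨C, hCgrowth, hC⟩ :=
    ((hunif.curry_nhds.filter_mono nhdsWithin_le_nhds).and (self_mem_nhdsWithin (s := Ioi 0))).exists
  have hsphere : ∀ᶠ t in 𝓝[>] 0, ∀ u ∈ sphere (0 : E) 1, f x + C * t ^ 2 < f (x + t • u) :=
    eventually_nhdsWithin_iff.mpr (hCgrowth.mono fun t ht htpos u hu => ht u hu htpos)
  exact ⟨C, hC, _, eventually_nhdsWithin_iff.mp <|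
    eventually_nhdsNE_of_eventually_sphere (Q := fun t y => f x + C * t ^ 2 < f y) hsphere,
    fun y hy hne => hy hne⟩

/-- Let `f : E → ℝ` be continuous on some neighborhood of `x`, Lipschitz
on a neighborhood of `x`, and `l`-stable at `x`. If `f'_D(x;h) = 0` and `f''_D(x;h) > 0`
for every `h ≠ 0`, then `x` is an isolated local minimizer of order `2` for `f`. -/
theorem lstable_dini_sufficient_isolated_min
    {E : Type*} [NormedAddCommGroup E] [InnerProductSpace ℝ E] [FiniteDimensional ℝ E]
    (f : E → ℝ) (x : E)
    (hcont : ∃ U ∈ 𝓝 x, ContinuousOn f U)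
    (hlip : ∃ U ∈ 𝓝 x, ∃ K : NNReal, LipschitzOnWith K f U)
    (hstab : LStableAt f x)
    (h : ∀ u : E, u ≠ 0 → diniD1 f x u = 0 ∧ 0 < diniD2 f x u 0) :
    ∃ C : ℝ, 0 < C ∧ ∃ N ∈ 𝓝 x, ∀ y ∈ N, y ≠ x → f x + C * ‖y - x‖ ^ 2 < f y :=
  lstable_dini_sufficient_isolated_min_general f x hcont hstab h
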